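/- arXiv:math/0407456 — 5 statements merged into one kernel-verified Lean document; each statement's English description precedes it below -/
import Mathlib

section
/- In a finite tree, every vertex belonging to the positive vertex-cover backbone (i.e., contained in every minimum vertex cover) has at least two neighbors in the negative backbone (i.e., vertices contained in no minimum vertex cover). -/
variable {V : Type*} [Fintype V] [DecidableEq V]

/-- `C` is a vertex cover of `A`. -/
def IsVC (A : SimpleGraph V) (C : Set V) : Prop :=
  ∀ e ∈ A.edgeSet, ∃ v ∈ C, v ∈ e

/-- `C` is a minimum vertex cover of `A`. -/
def IsMinVC (A : SimpleGraph V) (C : Set V) : Prop :=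
  IsVC A C ∧ ∀ D : Set V, IsVC A D → C.ncard ≤ D.ncard

/-- `M` is a matching of `A`: a set of edges, pairwise non-adjacent. -/
def IsMatch (A : SimpleGraph V) (M : Set (Sym2 V)) : Prop :=
  M ⊆ A.edgeSet ∧ ∀ e ∈ M, ∀ f ∈ M, e ≠ f → ∀ v : V, ¬(v ∈ e ∧ v ∈ f)

/-- `M` is a maximum matching of `A`. -/
def IsMaxMatch (A : SimpleGraph V) (M : Set (Sym2 V)) : Prop :=
  IsMatch A M ∧ ∀ N : Set (Sym2 V), IsMatch A N → N.ncard ≤ M.ncard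

/-- endpoints of a set of edges -/
def Rsupp (R : Set (Sym2 V)) : Set V := {v | ∃ e ∈ R, v ∈ e}

/-- the tricoloring conditions (iii) of the paper -/
def IsBColoring (A : SimpleGraph V) (B : Set V) (R : Set (Sym2 V)) (G : Set V) : Prop :=
  R ⊆ A.edgeSet ∧
  B ∪ G ∪ Rsupp R = Set.univ ∧
  Disjoint B G ∧ Disjoint B (Rsupp R) ∧ Disjoint G (Rsupp R) ∧
  (∀ e ∈ R, ∀ f ∈ R, e ≠ f → ∀ v : V, ¬(v ∈ e ∧ v ∈ f)) ∧
  (∀ v w : V, A.Adj v w → v ∈ G → w ∈ B) ∧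
  (∀ b ∈ B, 2 ≤ (A.neighborSet b ∩ G).ncard)

/-- positive vertex-cover backbone -/
def PosBB (A : SimpleGraph V) : Set V := {v | ∀ C : Set V, IsMinVC A C → v ∈ C}

/-- negative vertex-cover backbone -/
def NegBB (A : SimpleGraph V) : Set V := {v | ∀ C : Set V, IsMinVC A C → v ∉ C}

/-- degenerate vertex -/
def Degen (A : SimpleGraph V) (v : V) : Prop :=
  (∃ C : Set V, IsMinVC A C ∧ v ∈ C) ∧ (∃ C : Set V, IsMinVC A C ∧ v ∉ C)

/-- exclusive edge -/
def Exclusive (A : SimpleGraph V) (e : Sym2 V) : Prop :=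
  e ∈ A.edgeSet ∧ (∀ v ∈ e, Degen A v) ∧
  ∀ C : Set V, IsMinVC A C → ∃ v ∈ e, v ∉ C


/-!
Minimum vertex covers of a tree can be modified independently on the branches at a vertex `v`
that lies in all of them, because every such cover pays for `v` and the branches only meet
through `v`. Gluing covers branch by branch gives a minimum cover `E` containing every neighbour
of `v` outside the negative backbone. Trading `v` for the neighbours of `v` missing from `E`,
all of which lie in the negative backbone, yields another cover; if there were at most one of
them, it would be a minimum cover avoiding `v`.
-/

open SimpleGraph

section

variable {α : Type*} {A : SimpleGraph α} {C E S : Set α} {v w : α}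

theorem isVC_iff : IsVC A C ↔ ∀ ⦃a b⦄, A.Adj a b → a ∈ C ∨ b ∈ C := by
  refine ⟨fun h a b hab => ?_, fun h e he => ?_⟩
  · obtain ⟨x, hx, hxe⟩ := h s(a, b) hab
    rcases Sym2.mem_iff.mp hxe with rfl | rfl
    exacts [Or.inl hx, Or.inr hx]
  · induction e using Sym2.ind with
    | _ a b =>
      rcases h he with ha | hb
      exacts [⟨a, ha, Sym2.mem_mk_left a b⟩, ⟨b, hb, Sym2.mem_mk_right a b⟩]

theorem exists_isMinVC [Finite α] (A : SimpleGraph α) : ∃ C, IsMinVC A C := by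
  obtain ⟨C, hC, hmin⟩ := Set.exists_min_image {C : Set α | IsVC A C} Set.ncard
    (Set.toFinite _) ⟨Set.univ, isVC_iff.2 fun a _ _ => Or.inl trivial⟩
  exact ⟨C, hC, hmin⟩

theorem IsVC.diff_union_inter (hE : IsVC A E) (hC : IsVC A C) (hvE : v ∈ E) (hvS : v ∉ S)
    (hS : ∀ ⦃a b⦄, a ∈ S → A.Adj a b → b ∈ S ∨ b = v) : IsVC A (E \ S ∪ C ∩ S) := by
  rw [isVC_iff] at hE hC ⊢
  intro a b hab
  by_cases ha : a ∈ S <;> by_cases hb : b ∈ S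
  · rcases hC hab with h | h
    exacts [Or.inl (Or.inr ⟨h, ha⟩), Or.inr (Or.inr ⟨h, hb⟩)]
  · obtain rfl := (hS ha hab).resolve_left hb
    exact Or.inr (Or.inl ⟨hvE, hvS⟩)
  · obtain rfl := (hS hb hab.symm).resolve_left ha
    exact Or.inl (Or.inl ⟨hvE, hvS⟩)
  · rcases hE hab with h | h
    exacts [Or.inl (Or.inl ⟨h, ha⟩), Or.inr (Or.inl ⟨h, hb⟩)]

theorem IsMinVC.diff_union_inter [Finite α] (hE : IsMinVC A E) (hC : IsMinVC A C)
    (hvE : v ∈ E) (hvC : v ∈ C) (hvS : v ∉ S)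
    (hS : ∀ ⦃a b⦄, a ∈ S → A.Adj a b → b ∈ S ∨ b = v) : IsMinVC A (E \ S ∪ C ∩ S) := by
  have hCS : (C ∩ S).ncard ≤ (E ∩ S).ncard := by
    have hswap := hC.2 _ (hC.1.diff_union_inter hE.1 hvC hvS hS)
    have := Set.ncard_union_le (C \ S) (E ∩ S)
    have := Set.ncard_inter_add_ncard_sdiff_eq_ncard C S
    omega
  refine ⟨hE.1.diff_union_inter hC.1 hvE hvS hS, fun D hD => ?_⟩
  calc (E \ S ∪ C ∩ S).ncard
      ≤ (E \ S).ncard + (C ∩ S).ncard := Set.ncard_union_le _ _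
    _ ≤ (E \ S).ncard + (E ∩ S).ncard := by gcongr
    _ = E.ncard := by rw [add_comm, Set.ncard_inter_add_ncard_sdiff_eq_ncard]
    _ ≤ D.ncard := hE.2 D hD

theorem IsVC.diff_singleton_union_neighborSet_diff (hE : IsVC A E) :
    IsVC A (E \ {v} ∪ (A.neighborSet v \ E)) := by
  rw [isVC_iff] at hE ⊢
  intro a b hab
  by_cases hav : a = v
  · subst hav
    by_cases hb : b ∈ E
    exacts [Or.inr (Or.inl ⟨hb, hab.ne'⟩), Or.inr (Or.inr ⟨hab, hb⟩)]
  by_cases hbv : b = v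
  · subst hbv
    by_cases ha : a ∈ E
    exacts [Or.inl (Or.inl ⟨ha, hav⟩), Or.inl (Or.inr ⟨hab.symm, ha⟩)]
  rcases hE hab with h | h
  exacts [Or.inl (Or.inl ⟨h, hav⟩), Or.inr (Or.inl ⟨h, hbv⟩)]

namespace SimpleGraph

def branch (A : SimpleGraph α) (v w : α) : Set α :=
  {u | ∃ p : A.Walk w u, v ∉ p.support}

theorem right_mem_branch (h : w ≠ v) : w ∈ A.branch v w :=
  ⟨Walk.nil, by simpa using h.symm⟩

theorem left_notMem_branch : v ∉ A.branch v w :=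
  fun ⟨p, hp⟩ => hp p.end_mem_support

theorem mem_branch_or_eq_of_adj {a b : α} (ha : a ∈ A.branch v w) (hab : A.Adj a b) :
    b ∈ A.branch v w ∨ b = v := by
  obtain ⟨p, hp⟩ := ha
  by_cases hb : b = v
  · exact Or.inr hb
  · exact Or.inl ⟨p.concat hab, by simp [Walk.support_concat, hp, Ne.symm hb]⟩

theorem IsAcyclic.notMem_branch {w' : α} (hA : A.IsAcyclic) (hw : A.Adj v w)
    (hw' : A.Adj v w') (hne : w ≠ w') : w' ∉ A.branch v w := by
  rintro ⟨p, hp⟩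
  have hbridge : A.IsBridge s(v, w') := isAcyclic_iff_forall_isBridge.mp hA hw'
  rcases List.mem_cons.mp (isBridge_iff_forall_walk_mem_edges.mp hbridge (p.cons hw)) with h | h
  · exact hne (Sym2.congr_right.mp h).symm
  · exact hp (p.fst_mem_support_of_mem_edges h)

end SimpleGraph

theorem exists_isMinVC_superset [Finite α] (hA : A.IsAcyclic) (hv : v ∈ PosBB A) {T : Set α}
    (hT : T ⊆ A.neighborSet v \ NegBB A) : ∃ E, IsMinVC A E ∧ T ⊆ E := by
  induction T, Set.toFinite T using Set.Finite.induction_on with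
  | empty =>
    obtain ⟨E, hE⟩ := exists_isMinVC A
    exact ⟨E, hE, Set.empty_subset E⟩
  | @insert w T hwT _ ih =>
    obtain ⟨E, hE, hTE⟩ := ih ((Set.subset_insert w T).trans hT)
    obtain ⟨hvw, hw⟩ := hT (Set.mem_insert w T)
    obtain ⟨C, hC, hwC⟩ : ∃ C, IsMinVC A C ∧ w ∈ C := by simpa [NegBB] using hw
    refine ⟨E \ A.branch v w ∪ C ∩ A.branch v w, hE.diff_union_inter hC (hv E hE) (hv C hC)
      left_notMem_branch (fun _ _ => mem_branch_or_eq_of_adj), ?_⟩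
    rintro x (rfl | hx)
    · exact Or.inr ⟨hwC, right_mem_branch hvw.ne'⟩
    · exact Or.inl ⟨hTE hx,
        hA.notMem_branch hvw (hT (Or.inr hx)).1 (ne_of_mem_of_not_mem hx hwT).symm⟩

end

theorem posBB_two_neighbors_in_negBB (A : SimpleGraph V) (hA : A.IsTree)
    (v : V) (hv : v ∈ PosBB A) :
    2 ≤ (A.neighborSet v ∩ NegBB A).ncard := by
  by_contra! hlt
  obtain ⟨E, hE, hNE⟩ := exists_isMinVC_superset hA.isAcyclic hv subset_rfl
  set D := E \ {v} ∪ (A.neighborSet v \ E)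
  have hmissing : A.neighborSet v \ E ⊆ A.neighborSet v ∩ NegBB A :=
    fun x ⟨hx, hxE⟩ => ⟨hx, by_contra fun h => hxE (hNE ⟨hx, h⟩)⟩
  have hcard : D.ncard ≤ E.ncard := calc
    D.ncard ≤ (E \ {v}).ncard + (A.neighborSet v \ E).ncard := Set.ncard_union_le _ _
    _ ≤ (E \ {v}).ncard + 1 := by
      gcongr
      exact (Set.ncard_le_ncard hmissing).trans (by omega)
    _ = E.ncard := Set.ncard_sdiff_singleton_add_one (hv E hE)
  have hvD : v ∈ D := hv D ⟨hE.1.diff_singleton_union_neighborSet_diff,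
    fun F hF => hcard.trans (hE.2 F hF)⟩
  rcases hvD with h | h
  · exact h.2 rfl
  · exact h.1.ne rfl
end

section
/- In a finite tree, every degenerate vertex (one contained in some but not all minimum vertex covers) is an endpoint of exactly one exclusive edge, where an edge is exclusive if both endpoints are degenerate and no minimum vertex cover contains both of its endpoints. Consequently, the exclusive edges form a matching on the set of degenerate vertices. -/
variable {V : Type*} [Fintype V] [DecidableEq V]

/-! Induction on the number of edges of a forest. Pick a leaf `l` with neighbour `p` and delete
all edges at `p`. Minimum vertex covers of the two graphs correspond through `D ↦ insert p D` and
`C ↦ C \ {l, p}`, so degeneracy of vertices other than `l, p` and exclusivity of edges avoiding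
them do not change. An exclusive edge meeting `{l, p}` must be `s(l, p)`: an edge `s(p, y)` with
`y` degenerate lies inside some minimum cover `insert p D`. No minimum cover contains both `l` and
`p` (drop `l`); once `l` or `p` is degenerate, some minimum cover contains `l` but not `p` and
swapping the two gives another, so `s(l, p)` is exclusive. -/

section

omit [Fintype V] [DecidableEq V]

namespace SimpleGraph

variable {A : SimpleGraph V} {e : Sym2 V} {p : V}

theorem IsAcyclic.exists_leaf [Finite V] (hA : A.IsAcyclic) {u w : V} (huw : A.Adj u w) :
    ∃ l p : V, ∀ y, A.Adj l y ↔ y = p := by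
  have : Nonempty V := ⟨u⟩
  obtain ⟨a, b, q, hq, hmax⟩ := Walk.exists_isPath_forall_isPath_length_le_length A
  have hq_not_nil : ¬ q.Nil := by
    intro hnil
    have := hmax u w (Walk.cons huw .nil) (by simp [huw.ne])
    simp [Walk.length_eq_zero_iff.mpr hnil] at this
  refine ⟨a, q.snd, fun y => ⟨fun hy => hA.eq_snd_of_adj_start hq hy ?_, ?_⟩⟩
  · by_contra hy_notMem
    have := hmax _ _ (q.cons hy.symm) (hq.cons hy_notMem)
    simp at this
  · rintro rfl
    exact q.adj_snd hq_not_nil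

theorem mem_edgeSet_deleteIncidenceSet :
    e ∈ (A.deleteIncidenceSet p).edgeSet ↔ e ∈ A.edgeSet ∧ p ∉ e := by
  simp [edgeSet_deleteIncidenceSet, incidenceSet]

theorem deleteIncidenceSet_lt_of_adj {u : V} (hup : A.Adj u p) : A.deleteIncidenceSet p < A :=
  (A.deleteIncidenceSet_le p).lt_of_ne fun h => by
    have hup' : (A.deleteIncidenceSet p).Adj u p := by rwa [h]
    exact (deleteIncidenceSet_adj.mp hup').2.2 rfl

end SimpleGraph

open SimpleGraph

section

variable {A : SimpleGraph V} {C D : Set V} {e : Sym2 V} {l p v : V}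

theorem isVC_iff_forall_adj : IsVC A C ↔ ∀ u w, A.Adj u w → u ∈ C ∨ w ∈ C := by
  refine ⟨fun hC u w huw => ?_, fun hC e he => ?_⟩
  · obtain ⟨x, hxC, hx⟩ := hC s(u, w) huw
    rcases Sym2.mem_iff.mp hx with rfl | rfl
    exacts [.inl hxC, .inr hxC]
  · induction e using Sym2.ind with
    | _ u w =>
      rcases hC u w he with h | h
      exacts [⟨u, h, Sym2.mem_mk_left u w⟩, ⟨w, h, Sym2.mem_mk_right u w⟩]

theorem IsVC.mem_or_mem (hC : IsVC A C) {u w : V} (huw : A.Adj u w) : u ∈ C ∨ w ∈ C :=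
  isVC_iff_forall_adj.mp hC u w huw

theorem IsMinVC.exists_adj_notMem [Finite V] (hC : IsMinVC A C) (hv : v ∈ C) :
    ∃ w, A.Adj v w ∧ w ∉ C := by
  by_contra! hnbrs
  have hcover : IsVC A (C \ {v}) := by
    rw [isVC_iff_forall_adj]
    intro x y hxy
    by_cases hxv : x = v
    · exact .inr ⟨hnbrs y (hxv ▸ hxy), fun h => hxy.ne (hxv.trans h.symm)⟩
    by_cases hyv : y = v
    · exact .inl ⟨hnbrs x (hyv ▸ hxy.symm), fun h => hxy.ne (h.trans hyv.symm)⟩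
    exact (hC.1.mem_or_mem hxy).imp (fun h => ⟨h, hxv⟩) (fun h => ⟨h, hyv⟩)
  exact (Set.ncard_sdiff_singleton_lt_of_mem hv).not_ge (hC.2 _ hcover)

theorem IsVC.insert_of_deleteIncidenceSet (hD : IsVC (A.deleteIncidenceSet p) D) :
    IsVC A (insert p D) := by
  intro e he
  by_cases hpe : p ∈ e
  · exact ⟨p, Set.mem_insert p D, hpe⟩
  · obtain ⟨v, hvD, hve⟩ := hD e (mem_edgeSet_deleteIncidenceSet.mpr ⟨he, hpe⟩)
    exact ⟨v, Set.mem_insert_of_mem p hvD, hve⟩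

theorem IsVC.ncard_diff_add_one_le [Finite V] (hC : IsVC A C) (hlp : A.Adj l p) :
    (C \ {l, p}).ncard + 1 ≤ C.ncard := by
  obtain ⟨x, hxC, hx⟩ : ∃ x ∈ C, x = l ∨ x = p := by
    rcases hC.mem_or_mem hlp with h | h
    exacts [⟨l, h, .inl rfl⟩, ⟨p, h, .inr rfl⟩]
  have hsub : C \ {l, p} ⊆ C \ {x} :=
    Set.sdiff_subset_sdiff_right (by rcases hx with rfl | rfl <;> simp)
  calc (C \ {l, p}).ncard + 1 ≤ (C \ {x}).ncard + 1 :=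
        Nat.add_le_add_right (Set.ncard_le_ncard hsub) 1
    _ = C.ncard := Set.ncard_sdiff_singleton_add_one hxC

section Leaf

variable (hl : ∀ y, A.Adj l y ↔ y = p)
include hl

theorem notMem_of_mem_edgeSet_deleteIncidenceSet (he : e ∈ (A.deleteIncidenceSet p).edgeSet) :
    l ∉ e := by
  induction e using Sym2.ind with
  | _ x y =>
    rw [mem_edgeSet_deleteIncidenceSet] at he
    intro hle
    rcases Sym2.mem_iff.mp hle with rfl | rfl
    · exact he.2 ((hl y).mp he.1 ▸ Sym2.mem_mk_right _ _)
    · exact he.2 ((hl x).mp he.1.symm ▸ Sym2.mem_mk_left _ _)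

theorem IsVC.deleteIncidenceSet_diff (hC : IsVC A C) :
    IsVC (A.deleteIncidenceSet p) (C \ {l, p}) := by
  intro e he
  obtain ⟨v, hvC, hve⟩ := hC e (mem_edgeSet_deleteIncidenceSet.mp he).1
  refine ⟨v, ⟨hvC, ?_⟩, hve⟩
  rintro (rfl | rfl)
  · exact notMem_of_mem_edgeSet_deleteIncidenceSet hl he hve
  · exact (mem_edgeSet_deleteIncidenceSet.mp he).2 hve

theorem IsMinVC.insert_of_deleteIncidenceSet [Finite V]
    (hD : IsMinVC (A.deleteIncidenceSet p) D) : IsMinVC A (insert p D) := by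
  refine ⟨hD.1.insert_of_deleteIncidenceSet, fun E hE => ?_⟩
  calc (insert p D).ncard ≤ D.ncard + 1 := Set.ncard_insert_le p D
    _ ≤ (E \ {l, p}).ncard + 1 := Nat.add_le_add_right (hD.2 _ (hE.deleteIncidenceSet_diff hl)) 1
    _ ≤ E.ncard := hE.ncard_diff_add_one_le ((hl p).mpr rfl)

theorem IsMinVC.deleteIncidenceSet_diff [Finite V] (hC : IsMinVC A C) :
    IsMinVC (A.deleteIncidenceSet p) (C \ {l, p}) := by
  refine ⟨hC.1.deleteIncidenceSet_diff hl, fun E hE => Nat.le_of_add_le_add_right (b := 1) ?_⟩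
  calc (C \ {l, p}).ncard + 1 ≤ C.ncard := hC.1.ncard_diff_add_one_le ((hl p).mpr rfl)
    _ ≤ (insert p E).ncard := hC.2 _ hE.insert_of_deleteIncidenceSet
    _ ≤ E.ncard + 1 := Set.ncard_insert_le p E

theorem IsMinVC.notMem_of_leaf_mem [Finite V] (hC : IsMinVC A C) (hlC : l ∈ C) : p ∉ C := by
  obtain ⟨w, hlw, hwC⟩ := hC.exists_adj_notMem hlC
  exact (hl w).mp hlw ▸ hwC

theorem degen_deleteIncidenceSet_iff [Finite V] (hvl : v ≠ l) (hvp : v ≠ p) :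
    Degen (A.deleteIncidenceSet p) v ↔ Degen A v := by
  have hv : v ∉ ({l, p} : Set V) := by simp [hvl, hvp]
  constructor
  · rintro ⟨⟨D₁, hD₁, hv₁⟩, ⟨D₀, hD₀, hv₀⟩⟩
    exact ⟨⟨_, hD₁.insert_of_deleteIncidenceSet hl, Set.mem_insert_of_mem p hv₁⟩,
      ⟨_, hD₀.insert_of_deleteIncidenceSet hl, by simp [hvp, hv₀]⟩⟩
  · rintro ⟨⟨C₁, hC₁, hv₁⟩, ⟨C₀, hC₀, hv₀⟩⟩
    exact ⟨⟨_, hC₁.deleteIncidenceSet_diff hl, ⟨hv₁, hv⟩⟩,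
      ⟨_, hC₀.deleteIncidenceSet_diff hl, fun h => hv₀ h.1⟩⟩

theorem exclusive_deleteIncidenceSet_iff [Finite V] (hle : l ∉ e) (hpe : p ∉ e) :
    Exclusive (A.deleteIncidenceSet p) e ↔ Exclusive A e := by
  have hdegen : ∀ v ∈ e, Degen (A.deleteIncidenceSet p) v ↔ Degen A v := fun v hv =>
    degen_deleteIncidenceSet_iff hl (ne_of_mem_of_not_mem hv hle) (ne_of_mem_of_not_mem hv hpe)
  constructor
  · rintro ⟨he, hdeg, hmiss⟩
    refine ⟨(mem_edgeSet_deleteIncidenceSet.mp he).1, fun v hv => (hdegen v hv).mp (hdeg v hv),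
      fun C hC => ?_⟩
    obtain ⟨v, hve, hvC⟩ := hmiss _ (hC.deleteIncidenceSet_diff hl)
    refine ⟨v, hve, fun hvC' => hvC ⟨hvC', ?_⟩⟩
    rintro (rfl | rfl)
    exacts [hle hve, hpe hve]
  · rintro ⟨he, hdeg, hmiss⟩
    refine ⟨mem_edgeSet_deleteIncidenceSet.mpr ⟨he, hpe⟩,
      fun v hv => (hdegen v hv).mpr (hdeg v hv), fun D hD => ?_⟩
    obtain ⟨v, hve, hvD⟩ := hmiss _ (hD.insert_of_deleteIncidenceSet hl)
    exact ⟨v, hve, fun h => hvD (Set.mem_insert_of_mem p h)⟩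

theorem Exclusive.eq_or_notMem_of_leaf [Finite V] (he : Exclusive A e) :
    e = s(l, p) ∨ l ∉ e ∧ p ∉ e := by
  by_cases hle : l ∈ e
  · obtain ⟨y, rfl⟩ := Sym2.mem_iff_exists.mp hle
    exact .inl (by rw [(hl y).mp he.1])
  refine .inr ⟨hle, fun hpe => ?_⟩
  obtain ⟨y, rfl⟩ := Sym2.mem_iff_exists.mp hpe
  have hpy : A.Adj p y := he.1
  have hyl : y ≠ l := fun h => hle (h ▸ Sym2.mem_mk_right p y)
  obtain ⟨C, hC, hyC⟩ := (he.2.1 y (Sym2.mem_mk_right p y)).1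
  obtain ⟨x, hx, hxC⟩ := he.2.2 _ ((hC.deleteIncidenceSet_diff hl).insert_of_deleteIncidenceSet hl)
  rcases Sym2.mem_iff.mp hx with rfl | rfl
  · exact hxC (Set.mem_insert _ _)
  · exact hxC (Set.mem_insert_of_mem _ ⟨hyC, by simp [hyl, hpy.ne']⟩)

theorem exclusive_of_degen_leaf [Finite V] (hv : Degen A v) (hvlp : v = l ∨ v = p) :
    Exclusive A s(l, p) := by
  have hlp : A.Adj l p := (hl p).mpr rfl
  obtain ⟨C, hC, hpC⟩ : ∃ C, IsMinVC A C ∧ p ∉ C := by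
    rcases hvlp with rfl | rfl
    · obtain ⟨C, hC, hlC⟩ := hv.1
      exact ⟨C, hC, hC.notMem_of_leaf_mem hl hlC⟩
    · exact hv.2
  have hlC : l ∈ C := (hC.1.mem_or_mem hlp).resolve_right hpC
  have hC' := (hC.deleteIncidenceSet_diff hl).insert_of_deleteIncidenceSet hl
  have hlC' : l ∉ insert p (C \ {l, p}) := by simp [hlp.ne]
  refine ⟨hlp, fun w hw => ?_, fun D hD => ?_⟩
  · rcases Sym2.mem_iff.mp hw with rfl | rfl
    · exact ⟨⟨C, hC, hlC⟩, ⟨_, hC', hlC'⟩⟩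
    · exact ⟨⟨_, hC', Set.mem_insert _ _⟩, ⟨C, hC, hpC⟩⟩
  · by_cases hlD : l ∈ D
    · exact ⟨p, Sym2.mem_mk_right l p, hD.notMem_of_leaf_mem hl hlD⟩
    · exact ⟨l, Sym2.mem_mk_left l p, hlD⟩

end Leaf

end

theorem existsUnique_exclusive_of_isAcyclic [Finite V] {A : SimpleGraph V} {v : V}
    (hA : A.IsAcyclic) (hv : Degen A v) : ∃! e, Exclusive A e ∧ v ∈ e := by
  obtain ⟨C, hC, hvC⟩ := hv.1
  obtain ⟨w, hvw, -⟩ := hC.exists_adj_notMem hvC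
  obtain ⟨l, p, hl⟩ := hA.exists_leaf hvw
  by_cases hvlp : v = l ∨ v = p
  · refine ⟨s(l, p), ⟨exclusive_of_degen_leaf hl hv hvlp, ?_⟩, fun f ⟨hf, hvf⟩ => ?_⟩
    · rcases hvlp with rfl | rfl <;> simp
    refine (hf.eq_or_notMem_of_leaf hl).resolve_right fun ⟨hlf, hpf⟩ => ?_
    rcases hvlp with rfl | rfl
    exacts [hlf hvf, hpf hvf]
  push Not at hvlp
  obtain ⟨e, ⟨he, hve⟩, huniq⟩ := existsUnique_exclusive_of_isAcyclic
    (hA.anti (A.deleteIncidenceSet_le p)) ((degen_deleteIncidenceSet_iff hl hvlp.1 hvlp.2).mpr hv)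
  have hle := notMem_of_mem_edgeSet_deleteIncidenceSet hl he.1
  have hpe := (mem_edgeSet_deleteIncidenceSet.mp he.1).2
  refine ⟨e, ⟨(exclusive_deleteIncidenceSet_iff hl hle hpe).mp he, hve⟩, fun f ⟨hf, hvf⟩ => ?_⟩
  rcases hf.eq_or_notMem_of_leaf hl with rfl | ⟨hlf, hpf⟩
  · rcases Sym2.mem_iff.mp hvf with rfl | rfl
    exacts [(hvlp.1 rfl).elim, (hvlp.2 rfl).elim]
  · exact huniq f ⟨(exclusive_deleteIncidenceSet_iff hl hlf hpf).mpr hf, hvf⟩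
termination_by A.edgeSet.ncard
decreasing_by
  exact Set.ncard_lt_ncard (edgeSet_strict_mono (deleteIncidenceSet_lt_of_adj ((hl p).mpr rfl)))

end

theorem degen_unique_exclusive_edge (A : SimpleGraph V) (hA : A.IsTree) :
    (∀ v : V, Degen A v → ∃! e : Sym2 V, Exclusive A e ∧ v ∈ e) ∧
    IsMatch A {e | Exclusive A e} ∧
    Rsupp {e | Exclusive A e} = {v | Degen A v} := by
  have huniq := fun v (hv : Degen A v) => existsUnique_exclusive_of_isAcyclic hA.isAcyclic hv
  refine ⟨huniq, ⟨fun e he => he.1, fun e he f hf hef v ⟨hve, hvf⟩ => hef ?_⟩, ?_⟩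
  · exact (huniq v (he.2.1 v hve)).unique ⟨he, hve⟩ ⟨hf, hvf⟩
  · ext v
    refine ⟨fun ⟨e, he, hve⟩ => he.2.1 v hve, fun hv => ?_⟩
    obtain ⟨e, ⟨he, hve⟩, -⟩ := huniq v hv
    exact ⟨e, he, hve⟩
end

section
/- Let A be a finite tree with a tricoloring (B, R, G), where B and G are vertex sets and R is a set of edges, such that B, G, and the set of endpoints of edges in R partition the vertex set, the edges in R are pairwise non-adjacent, every edge with one endpoint in G has its other endpoint in B, and every vertex of B has at least two neighbors in G. Then every edge of R belongs to every maximum matching of A. -/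
/-!
Sending each vertex of `B` to one of its `G`-neighbours injectively and adding `R` gives a matching
with `|B| + |R|` edges. Hall's condition for this holds because a forest has fewer edges than
vertices: a set `s ⊆ B` sends at least `2|s|` edges to its `G`-neighbourhood `N(s)`, so
`2|s| < |s| + |N(s)|`.

Conversely, in any matching at most `|B|` edges meet `B`, and every other edge has both endpoints
in the vertex set `S` of `R`, because vertices of `G` only have neighbours in `B`. A maximum
matching therefore restricts to a perfect matching of `S`. A forest has at most one perfect
matching on a given vertex set, so this restriction is `R`.
-/

variable {V : Type*} [Fintype V] [DecidableEq V]

open Finset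
open scoped symmDiff

section Matchings

variable {α : Type*} {A : SimpleGraph α} {M N : Set (Sym2 α)}

lemma rsupp_union (M N : Set (Sym2 α)) : Rsupp (M ∪ N) = Rsupp M ∪ Rsupp N := by
  ext v
  simp only [Rsupp, Set.mem_union, Set.mem_ofPred_eq, or_and_right, exists_or]

lemma disjoint_of_disjoint_rsupp (h : Disjoint (Rsupp M) (Rsupp N)) : Disjoint M N :=
  Set.disjoint_left.2 fun e hM hN =>
    Set.disjoint_left.1 h ⟨e, hM, e.out_fst_mem⟩ ⟨e, hN, e.out_fst_mem⟩

lemma IsMatch.mono (hM : IsMatch A M) (hNM : N ⊆ M) : IsMatch A N :=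
  ⟨hNM.trans hM.1, fun e he f hf => hM.2 e (hNM he) f (hNM hf)⟩

lemma IsMatch.union (hM : IsMatch A M) (hN : IsMatch A N) (h : Disjoint (Rsupp M) (Rsupp N)) :
    IsMatch A (M ∪ N) := by
  have hMN : ∀ e ∈ M, ∀ f ∈ N, ∀ v : α, ¬(v ∈ e ∧ v ∈ f) := fun e he f hf v hv =>
    Set.disjoint_left.1 h ⟨e, he, hv.1⟩ ⟨f, hf, hv.2⟩
  refine ⟨Set.union_subset hM.1 hN.1, ?_⟩
  rintro e (he | he) f (hf | hf) hef v
  · exact hM.2 e he f hf hef v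
  · exact hMN e he f hf v
  · exact fun hv => hMN f hf e he v hv.symm
  · exact hN.2 e he f hf hef v

lemma IsMatch.rsupp_sdiff_subset (hN : IsMatch A N) (h : Rsupp N ⊆ Rsupp M) :
    Rsupp (N \ M) ⊆ Rsupp (M \ N) := by
  rintro v ⟨n, ⟨hnN, hnM⟩, hvn⟩
  obtain ⟨m, hmM, hvm⟩ := h ⟨n, hnN, hvn⟩
  refine ⟨m, ⟨hmM, fun hmN => ?_⟩, hvm⟩
  exact hN.2 m hmN n hnN (by rintro rfl; exact hnM hmM) v ⟨hvm, hvn⟩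

variable [Fintype α]

lemma IsMatch.ncard_rsupp (hM : IsMatch A M) : (Rsupp M).ncard = 2 * M.ncard := by
  classical
  have hsupp : Rsupp M = ↑(M.toFinset.biUnion Sym2.toFinset) := by
    ext v
    simp [Rsupp]
  rw [hsupp, Set.ncard_coe_finset, card_biUnion, Set.ncard_eq_toFinset_card', mul_comm]
  · refine sum_const_nat fun e he => ?_
    exact e.card_toFinset_of_not_isDiag (A.not_isDiag_of_mem_edgeSet (hM.1 (by simpa using he)))
  · intro e he f hf hef
    simp only [Function.onFun, Finset.disjoint_left, Sym2.mem_toFinset]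
    exact fun v hve hvf => hM.2 e (by simpa using he) f (by simpa using hf) hef v ⟨hve, hvf⟩

lemma IsMatch.ncard_le_of_forall_exists_mem {B : Set α} (hM : IsMatch A M)
    (hMB : ∀ e ∈ M, ∃ v ∈ B, v ∈ e) : M.ncard ≤ B.ncard := by
  classical
  rw [Set.ncard_eq_toFinset_card', Set.ncard_eq_toFinset_card']
  refine card_le_card_of_forall_subsingleton (fun e v => v ∈ e)
    (by simpa using hMB) fun v _ e he f hf => ?_
  by_contra hef
  simp only [Set.mem_ofPred_eq, Set.mem_toFinset] at he hf
  exact hM.2 e he.1 f hf.1 hef v ⟨he.2, hf.2⟩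

end Matchings

namespace SimpleGraph

variable {α : Type*} [Fintype α] {A : SimpleGraph α}

lemma IsAcyclic.card_edgeFinset_lt [Nonempty α] [Fintype A.edgeSet] (hA : A.IsAcyclic) :
    #A.edgeFinset < Fintype.card α := by
  obtain ⟨T, hAT, -, hT⟩ := connected_top.exists_isTree_le_of_le_of_isAcyclic le_top hA
  classical
  rw [← hT.card_edgeFinset]
  exact Nat.lt_succ_of_le (card_le_card (edgeFinset_mono hAT))

lemma IsAcyclic.ncard_lt_of_rsupp_subset (hA : A.IsAcyclic) {D : Set (Sym2 α)} {W : Set α}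
    (hDA : D ⊆ A.edgeSet) (hDW : Rsupp D ⊆ W) (hW : W.Nonempty) : D.ncard < W.ncard := by
  classical
  have hD : (fromEdgeSet D).edgeSet = D := by
    rw [edgeSet_fromEdgeSet, sdiff_eq_left, Set.disjoint_left]
    exact fun e he => A.not_isDiag_of_mem_edgeSet (hDA he)
  have hsupp : (fromEdgeSet D).support ⊆ W := fun v ⟨w, hvw⟩ =>
    hDW ⟨s(v, w), hD ▸ hvw, Sym2.mem_mk_left v w⟩
  have hacyc : ((fromEdgeSet D).induce W).IsAcyclic :=
    (hA.anti (by rwa [← edgeSet_subset_edgeSet, hD])).induce W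
  have : Nonempty W := hW.to_subtype
  have := hacyc.card_edgeFinset_lt
  rwa [card_edgeFinset_induce_of_support_subset hsupp, ← Set.ncard_coe_finset, coe_edgeFinset, hD,
    ← Nat.card_eq_fintype_card, Nat.card_coe_set_eq] at this

/-- The symmetric difference of two such matchings would be a nonempty set of edges with as many
endpoints as edges, which a forest does not have. -/
lemma IsAcyclic.eq_of_isMatch_of_rsupp_eq (hA : A.IsAcyclic) {M N : Set (Sym2 α)}
    (hM : IsMatch A M) (hN : IsMatch A N) (h : Rsupp M = Rsupp N) : M = N := by
  by_contra hne
  have hT : Rsupp (M \ N) = Rsupp (N \ M) :=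
    (hM.rsupp_sdiff_subset h.le).antisymm (hN.rsupp_sdiff_subset h.ge)
  have hDA : M ∆ N ⊆ A.edgeSet :=
    Set.union_subset (Set.sdiff_subset.trans hM.1) (Set.sdiff_subset.trans hN.1)
  have hlt := hA.ncard_lt_of_rsupp_subset hDA subset_rfl
    ((Set.symmDiff_nonempty.2 hne).elim fun e he => ⟨_, e, he, e.out_fst_mem⟩)
  have hMN := (hM.mono (Set.sdiff_subset (t := N))).ncard_rsupp
  have hNM := (hN.mono (Set.sdiff_subset (t := M))).ncard_rsupp
  rw [Set.symmDiff_def, rsupp_union, ← hT, Set.union_self,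
    Set.ncard_union_eq disjoint_sdiff_sdiff] at hlt
  rw [← hT] at hNM
  omega

lemma IsAcyclic.card_le_card_neighbors_of_two_le (hA : A.IsAcyclic) {B G : Set α}
    [DecidablePred (· ∈ G)] [DecidableRel A.Adj] (hBG : Disjoint B G)
    (hdeg : ∀ b ∈ B, 2 ≤ (A.neighborSet b ∩ G).ncard) (s : Finset B) :
    #s ≤ #{g | ∃ b ∈ s, A.Adj b g ∧ g ∈ G} := by
  classical
  rcases s.eq_empty_or_nonempty with rfl | ⟨b₀, hb₀⟩
  · simp
  set U : Finset α := {g | ∃ b ∈ s, A.Adj b g ∧ g ∈ G}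
  set t : B → Finset α := fun b => {g | A.Adj b g ∧ g ∈ G}
  set D : Finset (Sym2 α) := s.biUnion fun b => (t b).image (s(↑b, ·))
  have ht : ∀ b : B, 2 ≤ #(t b) := fun b => by
    have : A.neighborSet b ∩ G = ↑(t b) := by ext g; simp [t]
    simpa [this] using hdeg b b.2
  have hD : 2 * #s ≤ #D := by
    rw [card_biUnion]
    · calc 2 * #s = ∑ _b ∈ s, 2 := by rw [sum_const, smul_eq_mul, mul_comm]
        _ ≤ ∑ b ∈ s, #((t b).image (s(↑b, ·))) := sum_le_sum fun b _ => by
          rw [card_image_of_injective _ fun g g' => Sym2.congr_right.1]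
          exact ht b
    · intro b _ b' _ hbb'
      simp only [Function.onFun, Finset.disjoint_left, mem_image, not_exists, not_and]
      rintro _ ⟨g, hg, rfl⟩ g' - hgg'
      rcases Sym2.eq_iff.1 hgg' with ⟨hb, -⟩ | ⟨hb, -⟩
      · exact hbb' (Subtype.ext hb.symm)
      · exact Set.disjoint_left.1 hBG b'.2 (hb ▸ (mem_filter.1 hg).2.2)
  have hmemD : ∀ e ∈ D, ∃ b ∈ s, ∃ g, (A.Adj b g ∧ g ∈ G) ∧ s(↑b, g) = e := by
    simp [D, t]
  have hDA : (D : Set (Sym2 α)) ⊆ A.edgeSet := fun e he => by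
    obtain ⟨b, -, g, hg, rfl⟩ := hmemD e he
    exact hg.1
  have hDW : Rsupp (D : Set (Sym2 α)) ⊆ ↑(s.map (Function.Embedding.subtype _) ∪ U) := by
    rintro v ⟨e, he, hve⟩
    obtain ⟨b, hb, g, hg, rfl⟩ := hmemD e he
    rcases Sym2.mem_iff.1 hve with rfl | rfl
    · simp [hb]
    · simp only [U, coe_union, Set.mem_union, mem_coe, mem_filter, mem_univ, true_and]
      exact .inr ⟨b, hb, hg⟩
  have hlt := hA.ncard_lt_of_rsupp_subset hDA hDW ⟨b₀, by simp [hb₀]⟩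
  rw [Set.ncard_coe_finset, Set.ncard_coe_finset] at hlt
  have := card_union_le (s.map (Function.Embedding.subtype _)) U
  rw [card_map] at this
  omega

lemma IsAcyclic.exists_injective_adj_mem (hA : A.IsAcyclic) {B G : Set α} (hBG : Disjoint B G)
    (hdeg : ∀ b ∈ B, 2 ≤ (A.neighborSet b ∩ G).ncard) :
    ∃ f : B → α, f.Injective ∧ ∀ b : B, A.Adj b (f b) ∧ f b ∈ G := by
  classical
  exact (Fintype.all_card_le_filter_rel_iff_exists_injective fun (b : B) g => A.Adj b g ∧ g ∈ G).1
    (hA.card_le_card_neighbors_of_two_le hBG hdeg)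

end SimpleGraph

lemma isMatch_range_of_injective {α : Type*} {A : SimpleGraph α} {B G : Set α}
    (hBG : Disjoint B G) {f : B → α} (hf : f.Injective) (hfA : ∀ b : B, A.Adj b (f b) ∧ f b ∈ G) :
    IsMatch A (Set.range fun b : B => s(↑b, f b)) := by
  refine ⟨Set.range_subset_iff.2 fun b => (hfA b).1, ?_⟩
  rintro _ ⟨b, rfl⟩ _ ⟨b', rfl⟩ hbb' v ⟨hvb, hvb'⟩
  have hne : b ≠ b' := by rintro rfl; exact hbb' rfl
  have hB : ∀ c c' : B, (c : α) ≠ f c' := fun c c' h =>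
    Set.disjoint_left.1 hBG c.2 (h ▸ (hfA c').2)
  rcases Sym2.mem_iff.1 hvb with rfl | rfl <;> rcases Sym2.mem_iff.1 hvb' with h | h
  · exact hne (Subtype.ext h)
  · exact hB b b' h
  · exact hB b' b h.symm
  · exact hne (hf h)

namespace IsBColoring

variable {α : Type*} {A : SimpleGraph α} {B G : Set α} {R : Set (Sym2 α)}

lemma isMatch (h : IsBColoring A B R G) : IsMatch A R := ⟨h.1, h.2.2.2.2.2.1⟩

lemma exists_mem_of_not_mem_rsupp (h : IsBColoring A B R G) {e : Sym2 α} (he : e ∈ A.edgeSet)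
    {v : α} (hve : v ∈ e) (hv : v ∉ Rsupp R) : ∃ w ∈ B, w ∈ e := by
  obtain ⟨w, rfl⟩ := Sym2.mem_iff_exists.1 hve
  obtain ⟨-, hcover, -, -, -, -, hGB, -⟩ := h
  rcases (hcover ▸ Set.mem_univ v : v ∈ B ∪ G ∪ Rsupp R) with (hvB | hvG) | hvR
  · exact ⟨v, hvB, Sym2.mem_mk_left v w⟩
  · exact ⟨w, hGB v w he hvG, Sym2.mem_mk_right v w⟩
  · exact absurd hvR hv

variable [Fintype α]

lemma exists_isMatch_ncard (hA : A.IsAcyclic) (h : IsBColoring A B R G) :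
    ∃ N, IsMatch A N ∧ N.ncard = B.ncard + R.ncard := by
  have hR := h.isMatch
  obtain ⟨-, -, hBG, hBR, hGR, -, -, hdeg⟩ := h
  obtain ⟨f, hf, hfA⟩ := hA.exists_injective_adj_mem hBG hdeg
  have hinj : (fun b : B => s(↑b, f b)).Injective := fun b b' hbb' => by
    rcases Sym2.eq_iff.1 hbb' with ⟨h, -⟩ | ⟨h, -⟩
    · exact Subtype.ext h
    · exact absurd (h ▸ (hfA b').2) (Set.disjoint_left.1 hBG b.2)
  have hsupp : Rsupp (Set.range fun b : B => s(↑b, f b)) ⊆ B ∪ G := by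
    rintro v ⟨_, ⟨b, rfl⟩, hv⟩
    rcases Sym2.mem_iff.1 hv with rfl | rfl
    · exact .inl b.2
    · exact .inr (hfA b).2
  have hdisj : Disjoint (Rsupp (Set.range fun b : B => s(↑b, f b))) (Rsupp R) :=
    (Set.disjoint_union_left.2 ⟨hBR, hGR⟩).mono_left hsupp
  refine ⟨_, (isMatch_range_of_injective hBG hf hfA).union hR hdisj, ?_⟩
  rw [Set.ncard_union_eq (disjoint_of_disjoint_rsupp hdisj), Set.ncard_range_of_injective hinj,
    Nat.card_coe_set_eq]

lemma subset_of_ncard_le (hA : A.IsAcyclic) (h : IsBColoring A B R G) {M : Set (Sym2 α)}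
    (hM : IsMatch A M) (hcard : B.ncard + R.ncard ≤ M.ncard) : R ⊆ M := by
  set MR := {e ∈ M | ∀ v ∈ e, v ∈ Rsupp R}
  have hMRM : MR ⊆ M := Set.sep_subset _ _
  have hMR : IsMatch A MR := hM.mono hMRM
  have hMB : (M \ MR).ncard ≤ B.ncard := by
    refine (hM.mono Set.sdiff_subset).ncard_le_of_forall_exists_mem fun e ⟨heM, heMR⟩ => ?_
    obtain ⟨v, hve, hv⟩ : ∃ v ∈ e, v ∉ Rsupp R := by simpa [MR, heM] using heMR
    exact h.exists_mem_of_not_mem_rsupp (hM.1 heM) hve hv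
  have hsupp : Rsupp MR ⊆ Rsupp R := fun v ⟨e, he, hve⟩ => he.2 v hve
  have hsplit : (M \ MR).ncard + MR.ncard = M.ncard := Set.ncard_sdiff_add_ncard_of_subset hMRM
  have heq : Rsupp MR = Rsupp R := Set.eq_of_subset_of_ncard_le hsupp
    (by rw [hMR.ncard_rsupp, h.isMatch.ncard_rsupp]; omega)
  exact hA.eq_of_isMatch_of_rsupp_eq h.isMatch hMR heq.symm ▸ hMRM

end IsBColoring

theorem red_edges_in_every_max_matching (A : SimpleGraph V) (hA : A.IsTree)
    (B : Set V) (R : Set (Sym2 V)) (G : Set V) (hBC : IsBColoring A B R G)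
    (e : Sym2 V) (he : e ∈ R) (M : Set (Sym2 V)) (hM : IsMaxMatch A M) :
    e ∈ M := by
  obtain ⟨N, hN, hNcard⟩ := hBC.exists_isMatch_ncard hA.isAcyclic
  exact hBC.subset_of_ncard_le hA.isAcyclic hM.1 (hNcard ▸ hM.2 N hN) he
end

section
/- For a finite tree A with b-coloring (B, R, G), every minimum vertex cover of A contains all vertices of B, no vertex of G, and exactly one endpoint of each edge in R; hence every minimum vertex cover of A has cardinality |B| + |R|. -/
variable {V : Type*} [Fintype V] [DecidableEq V]

/-!
Replacing the green vertices of a minimum cover `C` by their (blue) neighbours gives another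
cover, so `|C ∩ G| ≤ |B \ C|`. Conversely, the at least two green neighbours of a blue vertex
outside `C` all lie in `C`. Rooting the tree at such a vertex and sending every vertex of `B \ C`
to a child in `C ∩ G` injects `B \ C` into `C ∩ G` and misses a second child of the root; hence
`B ⊆ C` and `C ∩ G = ∅`. Finally, `B` together with the endpoints of the red edges on one side of
a bipartition of the tree is a cover with at most `|B| + |R|` vertices, whereas `B` and one
`C`-endpoint of each red edge are already `|B| + |R|` distinct vertices of `C`; so `C` is exactly
this set.
-/

open SimpleGraph

section
variable {W : Type*} {A : SimpleGraph W}

lemma IsVC.neighborSet_subset {C : Set W} (hC : IsVC A C) {v : W} (hv : v ∉ C) :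
    A.neighborSet v ⊆ C := fun w hw => by
  obtain ⟨u, huC, hu⟩ := hC s(v, w) hw
  rcases Sym2.mem_iff.1 hu with rfl | rfl
  · exact absurd huC hv
  · exact huC

lemma IsVC.sdiff_union {B C G : Set W} (hC : IsVC A C)
    (hG : ∀ v w, A.Adj v w → v ∈ G → w ∈ B) : IsVC A (C \ G ∪ B) := by
  intro e he
  obtain ⟨v, hvC, hve⟩ := hC e he
  by_cases hvG : v ∈ G
  · obtain ⟨w, hvw⟩ := Sym2.mem_iff_exists.1 hve
    subst hvw
    exact ⟨w, .inr (hG v w he hvG), Sym2.mem_mk_right v w⟩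
  · exact ⟨v, .inl ⟨hvC, hvG⟩, hve⟩

lemma IsMinVC.ncard_inter_le_ncard_sdiff [Finite W] {B C G : Set W} (hC : IsMinVC A C)
    (hBG : Disjoint B G) (hG : ∀ v w, A.Adj v w → v ∈ G → w ∈ B) :
    (C ∩ G).ncard ≤ (B \ C).ncard := by
  have hsub : C \ G ∪ B ⊆ C \ G ∪ B \ C := fun v hv => by
    by_cases hvC : v ∈ C
    · rcases hv with hv | hv
      · exact .inl hv
      · exact .inl ⟨hvC, Set.disjoint_left.1 hBG hv⟩
    · exact hv.imp (fun h => absurd h.1 hvC) (fun h => ⟨h, hvC⟩)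
  have hsplit := Set.ncard_inter_add_ncard_sdiff_eq_ncard C G
  have := (hC.2 _ (hC.1.sdiff_union hG)).trans
    ((Set.ncard_le_ncard hsub).trans (Set.ncard_union_le _ _))
  omega

lemma ncard_inter_rsupp_le_ncard [Finite W] {R : Set (Sym2 W)} {P : Set W}
    (hR : R ⊆ A.edgeSet) (hP : ∀ v w, A.Adj v w → v ∈ P → w ∉ P) :
    (P ∩ Rsupp R).ncard ≤ R.ncard := by
  rcases R.eq_empty_or_nonempty with rfl | ⟨e₀, -⟩
  · simp [Rsupp]
  have : Nonempty (Sym2 W) := ⟨e₀⟩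
  have hsupp : ∀ v ∈ P ∩ Rsupp R, ∃ e ∈ R, v ∈ e := fun v hv => hv.2
  choose! f hfR hf using hsupp
  refine Set.ncard_le_ncard_of_injOn f hfR fun v hv w hw hvw => ?_
  by_contra hne
  have hfv : f v = s(v, w) := (Sym2.mem_and_mem_iff hne).1 ⟨hf v hv, hvw ▸ hf w hw⟩
  have hadj : A.Adj v w := by simpa [hfv] using hR (hfR v hv)
  exact hP v w hadj hv.1 hw.1

lemma isVC_union_inter_rsupp {B G P : Set W} {R : Set (Sym2 W)}
    (hcover : B ∪ G ∪ Rsupp R = Set.univ) (hG : ∀ v w, A.Adj v w → v ∈ G → w ∈ B)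
    (hP : ∀ v w, A.Adj v w → v ∈ P ∨ w ∈ P) : IsVC A (B ∪ P ∩ Rsupp R) := by
  have hsupp : ∀ v w, A.Adj v w → v ∉ B → w ∉ B → v ∈ Rsupp R := fun v w hvw hv hw => by
    have hvG : v ∉ G := fun h => hw (hG v w hvw h)
    have hv' : v ∈ B ∪ G ∪ Rsupp R := hcover ▸ Set.mem_univ v
    simp only [Set.mem_union] at hv'
    tauto
  intro e he
  induction e using Sym2.ind with
  | h v w =>
    by_cases hv : v ∈ B
    · exact ⟨v, .inl hv, Sym2.mem_mk_left v w⟩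
    by_cases hw : w ∈ B
    · exact ⟨w, .inl hw, Sym2.mem_mk_right v w⟩
    rcases hP v w he with hvP | hwP
    · exact ⟨v, .inr ⟨hvP, hsupp v w he hv hw⟩, Sym2.mem_mk_left v w⟩
    · exact ⟨w, .inr ⟨hwP, hsupp w v he.symm hw hv⟩, Sym2.mem_mk_right v w⟩

lemma exists_isVC_ncard_le [Finite W] {B G : Set W} {R : Set (Sym2 W)} (hA : A.Colorable 2)
    (hR : R ⊆ A.edgeSet) (hcover : B ∪ G ∪ Rsupp R = Set.univ)
    (hG : ∀ v w, A.Adj v w → v ∈ G → w ∈ B) :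
    ∃ D, IsVC A D ∧ D.ncard ≤ B.ncard + R.ncard := by
  obtain ⟨c⟩ := hA
  have hc : ∀ v w, A.Adj v w → (c v = 0 ∨ c w = 0) ∧ (c v = 0 → c w ≠ 0) :=
    fun v w hvw => by
      have := c.valid hvw
      omega
  refine ⟨B ∪ {v | c v = 0} ∩ Rsupp R,
    isVC_union_inter_rsupp hcover hG fun v w hvw => (hc v w hvw).1, ?_⟩
  calc (B ∪ {v | c v = 0} ∩ Rsupp R).ncard
      ≤ B.ncard + ({v | c v = 0} ∩ Rsupp R).ncard := Set.ncard_union_le _ _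
    _ ≤ B.ncard + R.ncard := by
      gcongr
      exact ncard_inter_rsupp_le_ncard hR fun v w hvw => (hc v w hvw).2

lemma IsVC.ncard_eq_and_existsUnique_mem [Finite W] {B C : Set W} {R : Set (Sym2 W)}
    (hC : IsVC A C) (hR : R ⊆ A.edgeSet)
    (hmatch : ∀ e ∈ R, ∀ f ∈ R, e ≠ f → ∀ v : W, ¬(v ∈ e ∧ v ∈ f))
    (hBC : B ⊆ C) (hBR : Disjoint B (Rsupp R)) (hle : C.ncard ≤ B.ncard + R.ncard) :
    C.ncard = B.ncard + R.ncard ∧ ∀ e ∈ R, ∃! v : W, v ∈ e ∧ v ∈ C := by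
  cases isEmpty_or_nonempty W
  · simp [Set.eq_empty_of_isEmpty]
  choose! g hgC hge using fun e (he : e ∈ R) => hC e (hR he)
  have hinj : R.InjOn g := fun e he f hf hef => by
    by_contra hne
    exact hmatch e he f hf hne (g e) ⟨hge e he, hef ▸ hge f hf⟩
  have hdisj : Disjoint B (g '' R) :=
    hBR.mono_right ((Set.image_subset_iff (t := Rsupp R)).2 fun e he => ⟨e, he, hge e he⟩)
  have hcard : (B ∪ g '' R).ncard = B.ncard + R.ncard := by
    rw [Set.ncard_union_eq hdisj, hinj.ncard_image]
  have hCeq : B ∪ g '' R = C :=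
    Set.eq_of_subset_of_ncard_le (Set.union_subset hBC (Set.image_subset_iff.2 hgC))
      (hcard ▸ hle)
  refine ⟨hCeq ▸ hcard, fun e he => ⟨g e, ⟨hge e he, hgC e he⟩, ?_⟩⟩
  rintro v ⟨hve, hvC⟩
  rw [← hCeq] at hvC
  obtain hvB | ⟨f, hf, rfl⟩ := hvC
  · exact absurd ⟨e, he, hve⟩ (Set.disjoint_left.1 hBR hvB)
  · by_contra hne
    exact hmatch f hf e he (fun h => hne (h ▸ rfl)) (g f) ⟨hge f hf, hve⟩

namespace SimpleGraph

theorem IsAcyclic.eq_of_adj_of_dist_add_one_eq (hA : A.IsAcyclic) {r a a' b : W}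
    (ha : A.Adj a b) (ha' : A.Adj a' b)
    (hda : A.dist r a + 1 = A.dist r b) (hda' : A.dist r a' + 1 = A.dist r b) : a = a' := by
  classical
  have hrb : A.Reachable r b := Reachable.of_dist_ne_zero (by omega)
  obtain ⟨q, hq, -⟩ := hrb.exists_path_of_dist
  suffices h : ∀ x, A.Adj x b → A.dist r x + 1 = A.dist r b → x = q.penultimate from
    (h a ha hda).trans (h a' ha' hda').symm
  intro x hx hdx
  obtain ⟨p, hp, hpl⟩ := (hrb.trans hx.symm.reachable).exists_path_of_dist
  have hxq : x ∈ q.support := by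
    by_contra hxq
    have hb := hA.mem_support_of_ne_mem_support_of_adj_of_isPath hp hq hx hxq
    have := A.dist_le (p.takeUntil b hb)
    have := p.length_takeUntil_le_length hb
    omega
  exact hA.eq_penultimate_of_adj_end hq hx.symm hxq

theorem IsTree.exists_adj_dist_eq_add_one (hA : A.IsTree) (r : W) {s : W} {T : Set W}
    (hT : 2 ≤ (A.neighborSet s ∩ T).ncard) :
    ∃ t ∈ A.neighborSet s ∩ T, A.dist r t = A.dist r s + 1 := by
  obtain ⟨t₁, ht₁⟩ := Set.nonempty_of_ncard_ne_zero (by omega : (A.neighborSet s ∩ T).ncard ≠ 0)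
  obtain ⟨t₂, ht₂, hne⟩ := Set.exists_ne_of_one_lt_ncard hT t₁
  by_contra! h
  have hparent : ∀ t ∈ A.neighborSet s ∩ T, A.dist r t + 1 = A.dist r s := fun t ht =>
    ((hA.dist_eq_dist_add_one_of_adj r ht.1).resolve_right (h t ht)).symm
  exact hne (hA.isAcyclic.eq_of_adj_of_dist_add_one_eq ht₂.1.symm ht₁.1.symm
    (hparent t₂ ht₂) (hparent t₁ ht₁))

theorem IsTree.ncard_lt_ncard_of_two_le_ncard_neighborSet_inter [Finite W] (hA : A.IsTree)
    {S T : Set W} (hS : S.Nonempty) (h : ∀ s ∈ S, 2 ≤ (A.neighborSet s ∩ T).ncard) :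
    S.ncard < T.ncard := by
  obtain ⟨r, hr⟩ := hS
  choose! child hchild hdist using fun s (hs : s ∈ S) => hA.exists_adj_dist_eq_add_one r (h s hs)
  have hinj : S.InjOn child := fun s hs s' hs' heq =>
    hA.isAcyclic.eq_of_adj_of_dist_add_one_eq (hchild s hs).1 (heq ▸ (hchild s' hs').1)
      (hdist s hs).symm (heq ▸ (hdist s' hs').symm)
  obtain ⟨t, ht, htne⟩ := Set.exists_ne_of_one_lt_ncard (h r hr) (child r)
  have hnew : t ∉ child '' S := by
    rintro ⟨s, hs, rfl⟩
    have hsr : s = r := hA.isAcyclic.eq_of_adj_of_dist_add_one_eq (hchild s hs).1 ht.1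
      (hdist s hs).symm (by rw [dist_self, dist_eq_one_iff_adj.2 ht.1])
    exact htne (hsr ▸ rfl)
  calc S.ncard < (insert t (child '' S)).ncard := by
        rw [Set.ncard_insert_of_notMem hnew, hinj.ncard_image]
        omega
    _ ≤ T.ncard := Set.ncard_le_ncard
        (Set.insert_subset ht.2 (Set.image_subset_iff.2 fun s hs => (hchild s hs).2))

theorem IsTree.subset_of_isMinVC [Finite W] (hA : A.IsTree) {B C G : Set W}
    (hC : IsMinVC A C) (hBG : Disjoint B G) (hG : ∀ v w, A.Adj v w → v ∈ G → w ∈ B)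
    (hB : ∀ b ∈ B, 2 ≤ (A.neighborSet b ∩ G).ncard) : B ⊆ C := by
  by_contra hBC
  have hlt : (B \ C).ncard < (C ∩ G).ncard :=
    hA.ncard_lt_ncard_of_two_le_ncard_neighborSet_inter (Set.sdiff_nonempty.2 hBC)
      fun s hs => (hB s hs.1).trans <| Set.ncard_le_ncard fun w hw =>
        ⟨hw.1, hC.1.neighborSet_subset hs.2 hw.1, hw.2⟩
  exact (hC.ncard_inter_le_ncard_sdiff hBG hG).not_gt hlt

end SimpleGraph

end

theorem minVC_of_bColoring (A : SimpleGraph V) (hA : A.IsTree)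
    (B : Set V) (R : Set (Sym2 V)) (G : Set V) (hBC : IsBColoring A B R G)
    (C : Set V) (hC : IsMinVC A C) :
    B ⊆ C ∧ Disjoint C G ∧ (∀ e ∈ R, ∃! v : V, v ∈ e ∧ v ∈ C) ∧
    C.ncard = B.ncard + R.ncard := by
  obtain ⟨hR, hcover, hBG, hBR, -, hmatch, hG, hB⟩ := hBC
  have hBC : B ⊆ C := hA.subset_of_isMinVC hC hBG hG hB
  have hCG : Disjoint C G := by
    have h := hC.ncard_inter_le_ncard_sdiff hBG hG
    rw [Set.sdiff_eq_empty.2 hBC, Set.ncard_empty, Nat.le_zero,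
      Set.ncard_eq_zero] at h
    exact Set.disjoint_iff_inter_eq_empty.2 h
  obtain ⟨D, hD, hDcard⟩ := exists_isVC_ncard_le hA.isBipartite hR hcover hG
  obtain ⟨hcard, hunique⟩ :=
    hC.1.ncard_eq_and_existsUnique_mem hR hmatch hBC hBR ((hC.2 D hD).trans hDcard)
  exact ⟨hBC, hCG, hunique, hcard⟩
end

section
/- Let A be a finite tree and let M be a matching of A containing an edge {g₀, b₀} with g₀ ∈ G and b₀ ∈ B, where (B, R, G) is a tricoloring of A satisfying: B, G, and the endpoints of R partition the vertices; edges of R are pairwise non-adjacent; every edge with one endpoint in G has its other endpoint in B; every vertex of B has at least two neighbors in G. Then there exists a matching M' of A with |M'| = |M| not containing the edge {g₀, b₀}, and which differs from M only on edges of an alternating path g₀, b₀, g₁, b₁, ..., g_k, b_k, g_{k+1} with all g_i ∈ G and b_i ∈ B. -/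
/-!
Walk greedily from the matched edge `g₀ b₀`: from a vertex of `B` go on to a neighbour in `G`
other than the one just left (there are at least two), from a vertex of `G` follow its `M`-edge,
whose other end lies in `B`. In a tree such a non-backtracking walk moves away from `g₀` at every
step, its `n`-th vertex being at distance `n`; so it never revisits a vertex and has to reach a
vertex of `G` not covered by `M`. Exchanging the `M`-edges of this path for its other edges gives
`M'`.
-/

variable {V : Type*} [Fintype V] [DecidableEq V]

open Function

namespace SimpleGraph.IsTree

variable {V : Type*} {A : SimpleGraph V}

theorem eq_of_adj_of_dist_add_one (hA : A.IsTree) {r u v w : V} (hv : A.Adj v u)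
    (hw : A.Adj w u) (hdv : A.dist r v + 1 = A.dist r u) (hdw : A.dist r w + 1 = A.dist r u) :
    v = w := by
  classical
  have notMem {x : V} {p : A.Walk r x} (hpl : p.length = A.dist r x)
      (hx : A.dist r x + 1 = A.dist r u) : u ∉ p.support := fun hu => by
    have := A.dist_le (p.takeUntil u hu)
    have := p.length_takeUntil_le_length hu
    omega
  -- `p` extended to `u` is the path from `r` to `u`; it passes through the neighbour `w` of `u`,
  -- which must therefore be its penultimate vertex `v`.
  obtain ⟨p, hp, hpl⟩ := hA.connected.exists_path_of_dist r v
  obtain ⟨q, hq, hql⟩ := hA.connected.exists_path_of_dist r w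
  have hP := hp.concat (notMem hpl hdv) hv
  have hwP : w ∈ (p.concat hv).support :=
    hA.isAcyclic.mem_support_of_ne_mem_support_of_adj_of_isPath hP hq hw.symm (notMem hql hdw)
  simpa using (hA.isAcyclic.eq_penultimate_of_adj_end hP hw.symm hwP).symm

theorem dist_eq_add_one_of_adj_of_ne (hA : A.IsTree) {r u v w : V} (hv : A.Adj v u)
    (hdv : A.dist r v + 1 = A.dist r u) (hw : A.Adj u w) (hwv : w ≠ v) :
    A.dist r w = A.dist r u + 1 :=
  (hA.dist_eq_dist_add_one_of_adj r hw).resolve_left fun h =>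
    hwv (hA.eq_of_adj_of_dist_add_one hw.symm hv h.symm hdv)

theorem dist_eq_of_nonbacktracking (hA : A.IsTree) {w : ℕ → V} {n : ℕ}
    (hadj : ∀ i < n, A.Adj (w i) (w (i + 1))) (hne : ∀ i, i + 2 ≤ n → w (i + 2) ≠ w i) :
    ∀ i ≤ n, A.dist (w 0) (w i) = i
  | 0, _ => A.dist_self
  | 1, h => dist_eq_one_iff_adj.mpr (hadj 0 h)
  | i + 2, h => by
    have hi := dist_eq_of_nonbacktracking hA hadj hne i (by omega)
    have hi₁ := dist_eq_of_nonbacktracking hA hadj hne (i + 1) (by omega)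
    rw [hA.dist_eq_add_one_of_adj_of_ne (hadj i (by omega)) (by rw [hi, hi₁])
      (hadj (i + 1) (by omega)) (hne i h), hi₁]

end SimpleGraph.IsTree

section Matching

variable {V : Type*} {A : SimpleGraph V} {M N D : Set (Sym2 V)}

theorem IsMatch.eq_of_mem_of_mem (hM : IsMatch A M) {e f : Sym2 V} {v : V} (he : e ∈ M)
    (hf : f ∈ M) (hve : v ∈ e) (hvf : v ∈ f) : e = f :=
  by_contra fun hef => hM.2 e he f hf hef v ⟨hve, hvf⟩

theorem IsMatch.diff_union (hM : IsMatch A M) (hN : IsMatch A N)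
    (hMN : ∀ e ∈ M \ D, ∀ f ∈ N, ∀ v ∈ e, v ∉ f) : IsMatch A (M \ D ∪ N) := by
  refine ⟨Set.union_subset (Set.sdiff_subset.trans hM.1) hN.1, ?_⟩
  rintro e (he | he) f (hf | hf) hef v ⟨hve, hvf⟩
  · exact hM.2 e he.1 f hf.1 hef v ⟨hve, hvf⟩
  · exact hMN e he f hf v hve hvf
  · exact hMN f hf e he v hvf hve
  · exact hN.2 e he f hf hef v ⟨hve, hvf⟩

end Matching

theorem Set.ncard_diff_union_eq_of_ncard_eq {α : Type*} [Finite α] {M N D : Set α} (hD : D ⊆ M)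
    (hMN : Disjoint M N) (hDN : D.ncard = N.ncard) : (M \ D ∪ N).ncard = M.ncard := by
  rw [Set.ncard_union_eq (hMN.mono_left Set.sdiff_subset), Set.ncard_sdiff hD, ← hDN]
  have := Set.ncard_le_ncard hD
  omega

theorem Set.setOf_exists_eq_eq_range {α ι : Type*} (f : ι → α) :
    {x | ∃ i, x = f i} = Set.range f := by
  ext
  simp [eq_comm]

section AlternatingPath

variable {V : Type*} {A : SimpleGraph V} {M : Set (Sym2 V)} {k : ℕ}
  {gs : Fin (k + 2) → V} {bs : Fin (k + 1) → V}

def swapAlong (M : Set (Sym2 V)) (gs : Fin (k + 2) → V) (bs : Fin (k + 1) → V) :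
    Set (Sym2 V) :=
  (M \ {e | ∃ i : Fin (k + 1), e = s(gs i.castSucc, bs i)}) ∪
    {e | ∃ i : Fin (k + 1), e = s(bs i, gs i.succ)}

theorem IsMatch.alternate_edge_notMem (hM : IsMatch A M) (hgs : Injective gs)
    (hmem : ∀ i, s(gs i.castSucc, bs i) ∈ M) (i : Fin (k + 1)) : s(bs i, gs i.succ) ∉ M :=
  fun h => Fin.castSucc_lt_succ.ne' <| hgs <| Sym2.congr_left.mp <| Sym2.eq_swap.trans <|
    hM.eq_of_mem_of_mem h (hmem i) (Sym2.mem_mk_left _ _) (Sym2.mem_mk_right _ _)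

theorem ncard_swapAlong [Finite V] (hM : IsMatch A M) (hgs : Injective gs) (hbs : Injective bs)
    (hgb : ∀ i j, gs i ≠ bs j) (hmem : ∀ i, s(gs i.castSucc, bs i) ∈ M) :
    (swapAlong M gs bs).ncard = M.ncard := by
  refine Set.ncard_diff_union_eq_of_ncard_eq ?_ ?_ ?_
  · rintro _ ⟨i, rfl⟩
    exact hmem i
  · rw [Set.disjoint_right]
    rintro _ ⟨i, rfl⟩
    exact hM.alternate_edge_notMem hgs hmem i
  · rw [Set.setOf_exists_eq_eq_range, Set.setOf_exists_eq_eq_range,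
      Set.ncard_range_of_injective, Set.ncard_range_of_injective]
    · exact fun i j h => (Sym2.eq_iff.mp h).elim (fun h => hbs h.1) fun h => (hgb _ _ h.2).elim
    · exact fun i j h => (Sym2.eq_iff.mp h).elim (fun h => hbs h.2) fun h => (hgb _ _ h.1).elim

theorem isMatch_swapAlong (hM : IsMatch A M) (hgs : Injective gs) (hbs : Injective bs)
    (hgb : ∀ i j, gs i ≠ bs j) (hmem : ∀ i, s(gs i.castSucc, bs i) ∈ M)
    (hadj : ∀ i, A.Adj (bs i) (gs i.succ)) (hfree : gs (Fin.last (k + 1)) ∉ Rsupp M) :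
    IsMatch A (swapAlong M gs bs) := by
  refine hM.diff_union ⟨?_, ?_⟩ ?_
  · rintro _ ⟨i, rfl⟩
    exact hadj i
  · rintro _ ⟨i, rfl⟩ _ ⟨j, rfl⟩ hne v ⟨hvi, hvj⟩
    have : i = j := by
      rcases Sym2.mem_iff.mp hvi with rfl | rfl <;> rcases Sym2.mem_iff.mp hvj with h | h
      · exact hbs h
      · exact (hgb _ _ h.symm).elim
      · exact (hgb _ _ h).elim
      · exact Fin.succ_injective _ (hgs h)
    exact hne (this ▸ rfl)
  · rintro e ⟨heM, heD⟩ _ ⟨i, rfl⟩ v hve hvi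
    rcases Sym2.mem_iff.mp hvi with rfl | rfl
    · exact heD ⟨i, hM.eq_of_mem_of_mem heM (hmem i) hve (Sym2.mem_mk_right _ _)⟩
    · rcases i.succ.eq_castSucc_or_eq_last with ⟨j, hj⟩ | hl
      · rw [hj] at hve
        exact heD ⟨j, hM.eq_of_mem_of_mem heM (hmem j) hve (Sym2.mem_mk_left _ _)⟩
      · exact hfree ⟨e, heM, hl ▸ hve⟩

theorem notMem_swapAlong (hM : IsMatch A M) (hgs : Injective gs)
    (hmem : ∀ i, s(gs i.castSucc, bs i) ∈ M) : s(gs 0, bs 0) ∉ swapAlong M gs bs := by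
  have h₀ : s(gs 0, bs 0) ∈ M := by simpa using hmem 0
  rintro (⟨-, hD⟩ | ⟨i, hi⟩)
  · exact hD ⟨0, by rw [Fin.castSucc_zero]⟩
  · exact hM.alternate_edge_notMem hgs hmem i (hi ▸ h₀)

end AlternatingPath

def secondOrderSeq {α : Type*} (f : α → α → α) (x₀ x₁ : α) : ℕ → α
  | 0 => x₀
  | 1 => x₁
  | n + 2 => f (secondOrderSeq f x₀ x₁ n) (secondOrderSeq f x₀ x₁ (n + 1))

/-- The walk `g₀ b₀ g₁ b₁ …`, encoded as `w (2 * i) = gᵢ` and `w (2 * i + 1) = bᵢ`. -/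
structure IsAlternatingSeq {V : Type*} (A : SimpleGraph V) (B G : Set V) (M : Set (Sym2 V))
    (w : ℕ → V) : Prop where
  zero_mem : w 0 ∈ G
  one_mem : w 1 ∈ B
  zero_one_mem : s(w 0, w 1) ∈ M
  step_of_mem_G : ∀ n, w (n + 1) ∈ G → w (n + 1) ∈ Rsupp M → s(w (n + 1), w (n + 2)) ∈ M
  step_of_mem_B : ∀ n, w (n + 1) ∈ B →
    A.Adj (w (n + 1)) (w (n + 2)) ∧ w (n + 2) ∈ G ∧ w (n + 2) ≠ w n

theorem exists_isAlternatingSeq {V : Type*} {A : SimpleGraph V} {B G : Set V}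
    {M : Set (Sym2 V)} (hBG : Disjoint B G)
    (hB2 : ∀ b ∈ B, 2 ≤ (A.neighborSet b ∩ G).ncard) {g₀ b₀ : V} (hg₀ : g₀ ∈ G) (hb₀ : b₀ ∈ B)
    (he₀ : s(g₀, b₀) ∈ M) : ∃ w, IsAlternatingSeq A B G M w ∧ w 0 = g₀ ∧ w 1 = b₀ := by
  have hnext : ∀ u v, ∃ x, (v ∈ G → v ∈ Rsupp M → s(v, x) ∈ M) ∧
      (v ∈ B → A.Adj v x ∧ x ∈ G ∧ x ≠ u) := by
    intro u v
    by_cases hvB : v ∈ B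
    · obtain ⟨x, ⟨hx, hxG⟩, hxu⟩ := Set.exists_ne_of_one_lt_ncard (hB2 v hvB) u
      exact ⟨x, fun hvG => (hBG.notMem_of_mem_left hvB hvG).elim, fun _ => ⟨hx, hxG, hxu⟩⟩
    · by_cases hv : v ∈ Rsupp M
      · obtain ⟨e, he, hve⟩ := hv
        obtain ⟨x, rfl⟩ := Sym2.mem_iff_exists.mp hve
        exact ⟨x, fun _ _ => he, fun h => (hvB h).elim⟩
      · exact ⟨v, fun _ h => (hv h).elim, fun h => (hvB h).elim⟩
  choose next hnext using hnext
  exact ⟨secondOrderSeq next g₀ b₀,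
    ⟨hg₀, hb₀, he₀, fun _ => (hnext _ _).1, fun _ => (hnext _ _).2⟩, rfl, rfl⟩

namespace IsAlternatingSeq

variable {V : Type*} {A : SimpleGraph V} {B G : Set V} {M : Set (Sym2 V)} {w : ℕ → V}

theorem mem_of_covered (hw : IsAlternatingSeq A B G M w) (hM : IsMatch A M)
    (hGB : ∀ u x, A.Adj u x → u ∈ G → x ∈ B) :
    ∀ {i : ℕ}, (∀ j < i, w (2 * j + 2) ∈ Rsupp M) →
      w (2 * i) ∈ G ∧ w (2 * i + 1) ∈ B ∧ s(w (2 * i), w (2 * i + 1)) ∈ M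
  | 0, _ => ⟨hw.zero_mem, hw.one_mem, hw.zero_one_mem⟩
  | i + 1, hcov => by
    have hb := (hw.mem_of_covered hM hGB (i := i) fun j hj => hcov j (by omega)).2.1
    have hg := (hw.step_of_mem_B (2 * i) hb).2.1
    have he := hw.step_of_mem_G (2 * i + 1) hg (hcov i (by omega))
    exact ⟨hg, hGB _ _ (hM.1 he) hg, he⟩

theorem dist_eq (hw : IsAlternatingSeq A B G M w) (hA : A.IsTree) (hM : IsMatch A M)
    (hGB : ∀ u x, A.Adj u x → u ∈ G → x ∈ B) {k : ℕ} (hcov : ∀ j < k, w (2 * j + 2) ∈ Rsupp M) :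
    ∀ j ≤ 2 * k + 2, A.dist (w 0) (w j) = j := by
  have hpair (i : ℕ) (hi : i ≤ k) :=
    hw.mem_of_covered hM hGB fun j (hj : j < i) => hcov j (by omega)
  refine hA.dist_eq_of_nonbacktracking (fun j hj => ?_) (fun j hj => ?_)
  · obtain ⟨i, rfl | rfl⟩ := Nat.even_or_odd' j
    · exact hM.1 (hpair i (by omega)).2.2
    · exact (hw.step_of_mem_B _ (hpair i (by omega)).2.1).1
  · obtain ⟨i, rfl | rfl⟩ := Nat.even_or_odd' j
    · exact (hw.step_of_mem_B _ (hpair i (by omega)).2.1).2.2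
    · intro h
      have heq := hM.eq_of_mem_of_mem (hpair (i + 1) (by omega)).2.2 (hpair i (by omega)).2.2
        (h ▸ Sym2.mem_mk_right _ _) (Sym2.mem_mk_right _ _)
      exact (hw.step_of_mem_B _ (hpair i (by omega)).2.1).2.2 (Sym2.congr_left.mp (h ▸ heq))

theorem exists_uncovered [Finite V] (hw : IsAlternatingSeq A B G M w) (hA : A.IsTree)
    (hM : IsMatch A M) (hGB : ∀ u x, A.Adj u x → u ∈ G → x ∈ B) :
    ∃ k, w (2 * k + 2) ∉ Rsupp M := by
  by_contra! hcov
  have hdist (n : ℕ) := hw.dist_eq hA hM hGB (k := n) (fun j _ => hcov j) n (by omega)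
  exact not_injective_infinite_finite w fun i j hij => by rw [← hdist i, ← hdist j, hij]

end IsAlternatingSeq

theorem exists_alternating_path {V : Type*} [Finite V] {A : SimpleGraph V} {B G : Set V}
    {M : Set (Sym2 V)} (hA : A.IsTree) (hM : IsMatch A M) (hBG : Disjoint B G)
    (hGB : ∀ u x, A.Adj u x → u ∈ G → x ∈ B) (hB2 : ∀ b ∈ B, 2 ≤ (A.neighborSet b ∩ G).ncard)
    {g₀ b₀ : V} (hg₀ : g₀ ∈ G) (hb₀ : b₀ ∈ B) (he₀ : s(g₀, b₀) ∈ M) :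
    ∃ (k : ℕ) (gs : Fin (k + 2) → V) (bs : Fin (k + 1) → V),
      gs 0 = g₀ ∧ bs 0 = b₀ ∧ Injective gs ∧ Injective bs ∧ (∀ i j, gs i ≠ bs j) ∧
      (∀ i, gs i ∈ G) ∧ (∀ i, bs i ∈ B) ∧ (∀ i, s(gs i.castSucc, bs i) ∈ M) ∧
      (∀ i, A.Adj (bs i) (gs i.succ)) ∧ gs (Fin.last (k + 1)) ∉ Rsupp M := by
  classical
  obtain ⟨w, hw, rfl, rfl⟩ := exists_isAlternatingSeq hBG hB2 hg₀ hb₀ he₀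
  have hex := hw.exists_uncovered hA hM hGB
  obtain ⟨k, hfree, hcov⟩ : ∃ k, w (2 * k + 2) ∉ Rsupp M ∧ ∀ j < k, w (2 * j + 2) ∈ Rsupp M :=
    ⟨Nat.find hex, Nat.find_spec hex, fun j hj => not_not.mp (Nat.find_min hex hj)⟩
  have hpair (i : ℕ) (hi : i ≤ k) :=
    hw.mem_of_covered hM hGB fun j (hj : j < i) => hcov j (by omega)
  have hinj {i j : ℕ} (hi : i ≤ 2 * k + 2) (hj : j ≤ 2 * k + 2) (h : w i = w j) : i = j := by
    rw [← hw.dist_eq hA hM hGB hcov i hi, ← hw.dist_eq hA hM hGB hcov j hj, h]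
  refine ⟨k, fun i => w (2 * i), fun i => w (2 * i + 1), rfl, rfl, ?_, ?_, ?_, fun i => ?_,
    fun i => (hpair i (by omega)).2.1, fun i => by simpa using (hpair i (by omega)).2.2,
    fun i => ?_, by simpa [mul_add] using hfree⟩
  · exact fun i j h => Fin.ext (by have := hinj (by omega) (by omega) h; omega)
  · exact fun i j h => Fin.ext (by have := hinj (by omega) (by omega) h; omega)
  · exact fun i j h => by have := hinj (by omega) (by omega) h; omega
  · rcases i.eq_castSucc_or_eq_last with ⟨i, rfl⟩ | rfl
    · simpa using (hpair i (by omega)).1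
    · simpa [mul_add] using (hw.step_of_mem_B _ (hpair k le_rfl).2.1).2.1
  · simpa [mul_add] using (hw.step_of_mem_B _ (hpair i (by omega)).2.1).1

theorem alternating_path_rematch (A : SimpleGraph V) (hA : A.IsTree)
    (B : Set V) (R : Set (Sym2 V)) (G : Set V) (hBC : IsBColoring A B R G)
    (M : Set (Sym2 V)) (hM : IsMatch A M)
    (g₀ b₀ : V) (hg₀ : g₀ ∈ G) (hb₀ : b₀ ∈ B) (he₀ : s(g₀, b₀) ∈ M) :
    ∃ (k : ℕ) (gs : Fin (k + 2) → V) (bs : Fin (k + 1) → V) (M' : Set (Sym2 V)),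
      gs 0 = g₀ ∧ bs 0 = b₀ ∧
      Function.Injective gs ∧ Function.Injective bs ∧
      (∀ i : Fin (k + 2), gs i ∈ G) ∧ (∀ i : Fin (k + 1), bs i ∈ B) ∧
      (∀ i : Fin (k + 1), s(gs i.castSucc, bs i) ∈ M) ∧
      (∀ i : Fin (k + 1), A.Adj (bs i) (gs i.succ)) ∧
      M' = (M \ {e | ∃ i : Fin (k + 1), e = s(gs i.castSucc, bs i)}) ∪
            {e | ∃ i : Fin (k + 1), e = s(bs i, gs i.succ)} ∧
      IsMatch A M' ∧ M'.ncard = M.ncard ∧ s(g₀, b₀) ∉ M' := by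
  obtain ⟨-, -, hBG, -, -, -, hGB, hB2⟩ := hBC
  obtain ⟨k, gs, bs, rfl, rfl, hgs, hbs, hgb, hG, hB, hmem, hadj, hfree⟩ :=
    exists_alternating_path hA hM hBG hGB hB2 hg₀ hb₀ he₀
  exact ⟨k, gs, bs, swapAlong M gs bs, rfl, rfl, hgs, hbs, hG, hB, hmem, hadj, rfl,
    isMatch_swapAlong hM hgs hbs hgb hmem hadj hfree, ncard_swapAlong hM hgs hbs hgb hmem,
    notMem_swapAlong hM hgs hmem⟩
end
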